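/- Let F be a field of characteristic zero, let G = {1, h, h²} be the cyclic group of order 3, and let P = {p₁, p₂, p₃, p₄} be the partially ordered set whose only strict order relations are p₁ ≤ p₄, p₂ ≤ p₃, p₂ ≤ p₄. Let θ, μ : P → G be given by θ = (1, h, h², 1) and μ = (1, h², h, 1) (values at p₁, p₂, p₃, p₄ respectively). Then the elementary graded algebras A^θ and A^μ on I(P,F) satisfy the same G-graded polynomial identities, T_G(A^θ) = T_G(A^μ), yet there is no F-algebra automorphism φ of I(P,F) with φ(A^θ(g)) = A^μ(g) for all g ∈ G; that is, A^θ and A^μ are not isomorphic as G-graded algebras. -/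

import Mathlib

/-- `A^θ(g)`: the `F`-subspace of the incidence algebra `I(P,F)` consisting of the functions
`f` with `f x y = 0` whenever `x ≤ y` and `(θ x)⁻¹ * θ y ≠ g`. -/
def elemSubspace (F : Type*) [Field F] {α : Type*} [PartialOrder α] [LocallyFiniteOrder α]
    {G : Type*} [Group G] (θ : α → G) (g : G) :
    Submodule F (IncidenceAlgebra F α) where
  carrier := {f | ∀ x y : α, x ≤ y → (θ x)⁻¹ * θ y ≠ g → f x y = 0}
  zero_mem' := by intro x y _ _; rfl
  add_mem' := by
    intro f₁ f₂ h₁ h₂ x y hxy hg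
    show (f₁ + f₂) x y = 0
    rw [IncidenceAlgebra.add_apply, h₁ x y hxy hg, h₂ x y hxy hg, add_zero]
  smul_mem' := by
    intro c f hf x y hxy hg
    show (c • f) x y = 0
    rw [IncidenceAlgebra.constSMul_apply, hf x y hxy hg, smul_zero]


/-- `Φ`, an element of the free algebra over `F` on the variables `x_i^g` (`i ∈ ℕ`, `g ∈ G`),
is a `G`-graded polynomial identity of the algebra `A` graded by the family of subspaces
`Asub : G → Submodule F A` if `Φ` vanishes under every substitution sending each variable
`x_i^g` to an element of `Asub g`. -/
def IsGradedPI {F A G : Type*} [Field F] [Ring A] [Algebra F A]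
    (Asub : G → Submodule F A) (Phi : FreeAlgebra F (ℕ × G)) : Prop :=
  ∀ v : ℕ × G → A, (∀ p : ℕ × G, v p ∈ Asub p.2) → FreeAlgebra.lift F v Phi = 0

/-- The four-element poset `P = {p₁, p₂, p₃, p₄}` whose only strict relations are
`p₁ ≤ p₄`, `p₂ ≤ p₃` and `p₂ ≤ p₄`. -/
inductive P4 : Type
  | p1 | p2 | p3 | p4
  deriving DecidableEq

instance : Fintype P4 :=
  ⟨{.p1, .p2, .p3, .p4}, fun x => by cases x <;> simp⟩

/-- The order relation of `P4` (as a Boolean-valued function). -/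
def P4.ble : P4 → P4 → Bool
  | .p1, .p1 => true
  | .p2, .p2 => true
  | .p3, .p3 => true
  | .p4, .p4 => true
  | .p1, .p4 => true
  | .p2, .p3 => true
  | .p2, .p4 => true
  | _, _ => false

instance : LE P4 := ⟨fun a b => P4.ble a b = true⟩

instance : DecidableRel (α := P4) (· ≤ ·) :=
  fun a b => inferInstanceAs (Decidable (P4.ble a b = true))

instance : PartialOrder P4 where
  le := (· ≤ ·)
  le_refl := by decide
  le_trans := by decide
  le_antisymm := by decide

instance : DecidableRel (α := P4) (· < ·) :=
  fun _ _ => decidable_of_iff _ lt_iff_le_not_ge.symm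

instance : LocallyFiniteOrder P4 := Fintype.toLocallyFiniteOrder

/-- The generator `h` of the cyclic group of order `3`, realized as `Multiplicative (ZMod 3)`. -/
def hgen : Multiplicative (ZMod 3) := Multiplicative.ofAdd 1

/-- The grading function `θ = (1, h, h², 1)`. -/
def theta4 : P4 → Multiplicative (ZMod 3)
  | .p1 => 1
  | .p2 => hgen
  | .p3 => hgen ^ 2
  | .p4 => 1

/-- The grading function `μ = (1, h², h, 1)`. -/
def mu4 : P4 → Multiplicative (ZMod 3)
  | .p1 => 1
  | .p2 => hgen ^ 2
  | .p3 => hgen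
  | .p4 => 1

/-!
Relabelling the points of `P` by the transpositions `(p₃ p₄)` and `(p₂ p₃)` defines two algebra
maps `I(P,F) → I(P,F)`, `f ↦ ((x, y) ↦ f (σ x) (σ y))` on the pairs `x ≤ y`, which send every
`A^μ(g)` into `A^θ(g)` and every `A^θ(g)` into `A^μ(g)`. Their kernels, spanned by `e₁₄` and by
`e₂₃, e₂₄` respectively, meet in `0`; so a graded identity of one grading, evaluated on the other,
gives an element killed by both maps, hence `0`.

Against a graded isomorphism: `e₁₄ ∈ A^θ(1)` and `e₂₃ ∈ A^θ(h)` satisfy `e₁₄² = 0`, `e₂₃ e₄₄ = 0` and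
`e₁₄ e₄₄ = e₁₄`. In `A^μ`, however, `A^μ(h)` is spanned by `e₂₄` and `A^μ(1)` by the diagonal
and `e₁₄`. So for nonzero `y ∈ A^μ(h)`, `y e = 0` forces `e p₄ p₄ = 0`, and then an
`x ∈ A^μ(1)` with `x² = 0` and `x e = x` has zero diagonal and zero `(p₁, p₄)` entry.
-/

namespace IncidenceAlgebra

open Finset

variable {𝕜 α β : Type*}

section Comap

variable [Zero 𝕜] [LE α] [LE β] [DecidableLE α]

def comap (e : α → β) (f : IncidenceAlgebra 𝕜 β) : IncidenceAlgebra 𝕜 α :=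
  ⟨fun x y => if x ≤ y then f (e x) (e y) else 0, fun _ _ h => if_neg h⟩

lemma comap_apply_of_le (e : α → β) (f : IncidenceAlgebra 𝕜 β) {x y : α} (h : x ≤ y) :
    comap e f x y = f (e x) (e y) :=
  if_pos h

lemma eq_zero_of_forall_comap_eq_zero {ι : Type*} (e : ι → α → β)
    (hcover : ∀ u v, u ≤ v → ∃ i x y, x ≤ y ∧ e i x = u ∧ e i y = v)
    {f : IncidenceAlgebra 𝕜 β} (hf : ∀ i, comap (e i) f = 0) : f = 0 := by
  ext u v huv
  obtain ⟨i, x, y, hxy, rfl, rfl⟩ := hcover u v huv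
  rw [← comap_apply_of_le _ f hxy, hf i, zero_apply, zero_apply]

end Comap

section ComapAlgHom

variable [CommSemiring 𝕜] [PartialOrder α] [LocallyFiniteOrder α] [DecidableEq α] [DecidableLE α]
  [PartialOrder β] [LocallyFiniteOrder β] [DecidableEq β]

def comapAlgHom (e : α → β) (he : e.Injective)
    (hIcc : ∀ x y, x ≤ y → ∀ w, e x ≤ w → w ≤ e y → ∃ z, x ≤ z ∧ z ≤ y ∧ e z = w) :
    IncidenceAlgebra 𝕜 β →ₐ[𝕜] IncidenceAlgebra 𝕜 α :=
  AlgHom.ofLinearMap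
    { toFun := comap e
      map_add' f g := by ext x y h; simp [comap_apply_of_le _ _ h]
      map_smul' c f := by ext x y h; simp [comap_apply_of_le _ _ h] }
    (by ext x y h; simp [comap_apply_of_le _ _ h, he.eq_iff])
    (fun f g => by
      ext x y hxy
      have hsub : Icc (e x) (e y) ⊆ (Icc x y).image e := fun w hw => by
        obtain ⟨hxw, hwy⟩ := mem_Icc.1 hw
        obtain ⟨z, hxz, hzy, rfl⟩ := hIcc x y hxy w hxw hwy
        exact mem_image_of_mem e (mem_Icc.2 ⟨hxz, hzy⟩)
      have hzero : ∀ w ∈ (Icc x y).image e, w ∉ Icc (e x) (e y) → f (e x) w * g w (e y) = 0 := by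
        intro w _ hw
        rcases not_and_or.1 (mt mem_Icc.2 hw) with h | h
        · rw [apply_eq_zero_of_not_le h, zero_mul]
        · rw [apply_eq_zero_of_not_le h, mul_zero]
      simp only [LinearMap.coe_mk, AddHom.coe_mk, comap_apply_of_le _ _ hxy, mul_apply]
      rw [sum_subset hsub hzero, sum_image he.injOn]
      refine sum_congr rfl fun z hz => ?_
      obtain ⟨hxz, hzy⟩ := mem_Icc.1 hz
      rw [comap_apply_of_le _ _ hxz, comap_apply_of_le _ _ hzy])

end ComapAlgHom

section Single

variable [Zero 𝕜] [One 𝕜] [LE α] [DecidableEq α]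

def single (a b : α) (hab : a ≤ b) : IncidenceAlgebra 𝕜 α :=
  ⟨fun x y => if x = a ∧ y = b then 1 else 0, fun _ _ h => if_neg fun ⟨hx, hy⟩ => h (hx ▸ hy ▸ hab)⟩

lemma single_apply (a b : α) (hab : a ≤ b) (x y : α) :
    single (𝕜 := 𝕜) a b hab x y = if x = a ∧ y = b then 1 else 0 :=
  rfl

lemma single_ne_zero [NeZero (1 : 𝕜)] (a b : α) (hab : a ≤ b) : single (𝕜 := 𝕜) a b hab ≠ 0 :=
  fun h => by simpa [single_apply] using congrArg (fun f : IncidenceAlgebra 𝕜 α => f a b) h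

end Single

section Mul

variable [AddCommMonoid 𝕜] [Mul 𝕜] [PartialOrder α] [LocallyFiniteOrder α]

lemma mul_apply_self (f g : IncidenceAlgebra 𝕜 α) (a : α) : (f * g) a a = f a a * g a a := by
  rw [mul_apply, Icc_self, sum_singleton]

lemma mul_apply_of_covBy [DecidableEq α] (f g : IncidenceAlgebra 𝕜 α) {a b : α} (h : a ⋖ b) :
    (f * g) a b = f a a * g a b + f a b * g b b := by
  have hIcc : Icc a b = {a, b} := coe_injective <| by rw [coe_Icc, h.Icc_eq, coe_pair]
  rw [mul_apply, hIcc, sum_pair h.ne]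

end Mul

section Semiring

variable [Semiring 𝕜] [PartialOrder α] [LocallyFiniteOrder α] [DecidableEq α]

lemma single_mul_single (a b c : α) (hab : a ≤ b) (hbc : b ≤ c) :
    single (𝕜 := 𝕜) a b hab * single b c hbc = single a c (hab.trans hbc) := by
  ext x y _
  simp only [mul_apply, single_apply]
  by_cases hxy : x = a ∧ y = c
  · obtain ⟨rfl, rfl⟩ := hxy
    rw [sum_eq_single_of_mem b (mem_Icc.2 ⟨hab, hbc⟩) fun z _ hz => by simp [hz]]
    simp
  · rw [if_neg hxy]
    refine sum_eq_zero fun z _ => ?_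
    split_ifs with h₁ h₂
    · exact absurd ⟨h₁.1, h₂.2⟩ hxy
    all_goals simp

lemma single_mul_single_of_ne {a b c d : α} (hab : a ≤ b) (hcd : c ≤ d) (hbc : b ≠ c) :
    single (𝕜 := 𝕜) a b hab * single c d hcd = 0 := by
  ext x y _
  refine sum_eq_zero fun z _ => ?_
  simp only [single_apply]
  split_ifs with h₁ h₂
  · exact absurd (h₁.2.symm.trans h₂.1) hbc
  all_goals simp

end Semiring

end IncidenceAlgebra

theorem IsGradedPI.of_jointlyInjective {ι F A B G : Type*} [Field F] [Ring A] [Algebra F A]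
    [Ring B] [Algebra F B] {Asub : G → Submodule F A} {Bsub : G → Submodule F B}
    (ψ : ι → A →ₐ[F] B) (hψ : ∀ i g a, a ∈ Asub g → ψ i a ∈ Bsub g)
    (hinj : ∀ a, (∀ i, ψ i a = 0) → a = 0) {Φ : FreeAlgebra F (ℕ × G)}
    (hΦ : IsGradedPI Bsub Φ) : IsGradedPI Asub Φ := fun v hv =>
  hinj _ fun i => by
    have hcomp : (ψ i).comp (FreeAlgebra.lift F v) = FreeAlgebra.lift F (ψ i ∘ v) :=
      FreeAlgebra.hom_ext (by ext; simp)
    rw [← AlgHom.comp_apply, hcomp]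
    exact hΦ _ fun p => hψ i p.2 _ (hv p)

section ElemSubspace

open IncidenceAlgebra

variable {F α β G : Type*} [Field F] [PartialOrder α] [LocallyFiniteOrder α] [Group G]
  {θ : α → G} {g : G}

lemma eq_zero_of_mem_elemSubspace {f : IncidenceAlgebra F α} (hf : f ∈ elemSubspace F θ g)
    (h : ∀ x y, x ≤ y → (θ x)⁻¹ * θ y = g → f x y = 0) : f = 0 := by
  ext x y hxy
  by_cases hg : (θ x)⁻¹ * θ y = g
  · exact h x y hxy hg
  · exact hf x y hxy hg

lemma single_mem_elemSubspace [DecidableEq α] (a b : α) (hab : a ≤ b)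
    (hg : (θ a)⁻¹ * θ b = g) : single a b hab ∈ elemSubspace F θ g := by
  rintro x y - hxy
  rw [single_apply, if_neg]
  rintro ⟨rfl, rfl⟩
  exact hxy hg

variable [DecidableLE α] [PartialOrder β] [LocallyFiniteOrder β] {μ : β → G}

lemma comap_mem_elemSubspace (e : α → β)
    (hdeg : ∀ x y, x ≤ y → e x ≤ e y → (μ (e x))⁻¹ * μ (e y) = (θ x)⁻¹ * θ y)
    {f : IncidenceAlgebra F β} (hf : f ∈ elemSubspace F μ g) : comap e f ∈ elemSubspace F θ g := by
  intro x y hxy hg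
  rw [comap_apply_of_le e f hxy]
  by_cases hle : e x ≤ e y
  · exact hf _ _ hle (hdeg x y hxy hle ▸ hg)
  · exact apply_eq_zero_of_not_le hle f

theorem isGradedPI_elemSubspace_of_comap [DecidableEq α] [DecidableEq β] {ι : Type*}
    (e : ι → α → β) (he : ∀ i, (e i).Injective)
    (hIcc : ∀ i x y, x ≤ y → ∀ w, e i x ≤ w → w ≤ e i y → ∃ z, x ≤ z ∧ z ≤ y ∧ e i z = w)
    (hcover : ∀ u v, u ≤ v → ∃ i x y, x ≤ y ∧ e i x = u ∧ e i y = v)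
    (hdeg : ∀ i x y, x ≤ y → e i x ≤ e i y → (μ (e i x))⁻¹ * μ (e i y) = (θ x)⁻¹ * θ y)
    {Φ : FreeAlgebra F (ℕ × G)} (hΦ : IsGradedPI (elemSubspace F θ) Φ) :
    IsGradedPI (elemSubspace F μ) Φ :=
  hΦ.of_jointlyInjective (fun i => comapAlgHom (e i) (he i) (hIcc i))
    (fun i _ _ => comap_mem_elemSubspace (e i) (hdeg i))
    (fun _ => eq_zero_of_forall_comap_eq_zero e hcover)

end ElemSubspace

namespace P4

open IncidenceAlgebra

def relabel : Fin 2 → P4 → P4 := ![Equiv.swap .p3 .p4, Equiv.swap .p2 .p3]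

theorem isGradedPI_theta4_iff_mu4 {F : Type*} [Field F]
    (Φ : FreeAlgebra F (ℕ × Multiplicative (ZMod 3))) :
    IsGradedPI (elemSubspace F theta4) Φ ↔ IsGradedPI (elemSubspace F mu4) Φ := by
  have he : ∀ i, (relabel i).Injective := by decide
  have hIcc : ∀ i x y, x ≤ y → ∀ w, relabel i x ≤ w → w ≤ relabel i y →
      ∃ z, x ≤ z ∧ z ≤ y ∧ relabel i z = w := by decide
  have hcover : ∀ u v, u ≤ v → ∃ i x y, x ≤ y ∧ relabel i x = u ∧ relabel i y = v := by decide
  exact ⟨isGradedPI_elemSubspace_of_comap relabel he hIcc hcover (by decide),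
    isGradedPI_elemSubspace_of_comap relabel he hIcc hcover (by decide)⟩

lemma p1_covBy_p4 : P4.p1 ⋖ .p4 := ⟨by decide, by decide⟩

lemma p2_covBy_p4 : P4.p2 ⋖ .p4 := ⟨by decide, by decide⟩

variable {F : Type*} [Field F]

lemma eq_zero_of_mem_elemSubspace_mu4 {x y e : IncidenceAlgebra F P4}
    (hx : x ∈ elemSubspace F mu4 1) (hy : y ∈ elemSubspace F mu4 hgen) (hy₀ : y ≠ 0)
    (hxx : x * x = 0) (hye : y * e = 0) (hxe : x * e = x) : x = 0 := by
  have hy₂₄ : y .p2 .p4 ≠ 0 := fun h => hy₀ <| eq_zero_of_mem_elemSubspace hy <| by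
    intro a b hab hg
    obtain ⟨rfl, rfl⟩ : a = .p2 ∧ b = .p4 := by revert a b; decide
    exact h
  have he₄₄ : e .p4 .p4 = 0 := by
    have h := congrArg (fun f : IncidenceAlgebra F P4 => f .p2 .p4) hye
    rw [mul_apply_of_covBy _ _ p2_covBy_p4,
      hy .p2 .p2 le_rfl (by decide), zero_mul, zero_add] at h
    exact (mul_eq_zero.1 h).resolve_left hy₂₄
  have hdiag : ∀ a, x a a = 0 := fun a => by
    simpa [mul_apply_self] using congrArg (fun f : IncidenceAlgebra F P4 => f a a) hxx
  have hx₁₄ : x .p1 .p4 = 0 := by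
    have h := congrArg (fun f : IncidenceAlgebra F P4 => f .p1 .p4) hxe
    simpa [mul_apply_of_covBy _ _ p1_covBy_p4, hdiag, he₄₄] using h.symm
  refine eq_zero_of_mem_elemSubspace hx fun a b hab hg => ?_
  obtain rfl | ⟨rfl, rfl⟩ : a = b ∨ a = .p1 ∧ b = .p4 := by revert a b; decide
  exacts [hdiag a, hx₁₄]

theorem not_exists_gradedIso_theta4_mu4 :
    ¬∃ φ : IncidenceAlgebra F P4 ≃ₐ[F] IncidenceAlgebra F P4,
        ∀ g, (elemSubspace F theta4 g).map φ.toLinearMap = elemSubspace F mu4 g := by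
  rintro ⟨φ, hφ⟩
  have hmem : ∀ {g f}, f ∈ elemSubspace F theta4 g → φ f ∈ elemSubspace F mu4 g :=
    fun {g _} hf => hφ g ▸ Submodule.mem_map_of_mem hf
  let e₁₄ : IncidenceAlgebra F P4 := single .p1 .p4 (by decide)
  let e₂₃ : IncidenceAlgebra F P4 := single .p2 .p3 (by decide)
  let e₄₄ : IncidenceAlgebra F P4 := single .p4 .p4 le_rfl
  have h₁₄ : e₁₄ ∈ elemSubspace F theta4 1 := single_mem_elemSubspace _ _ _ (by decide)
  have h₂₃ : e₂₃ ∈ elemSubspace F theta4 hgen := single_mem_elemSubspace _ _ _ (by decide)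
  have hφ₁₄ : φ e₁₄ = 0 := eq_zero_of_mem_elemSubspace_mu4 (hmem h₁₄) (hmem h₂₃)
    ((map_ne_zero_iff φ φ.injective).2 (single_ne_zero _ _ _)) (e := φ e₄₄)
    (by rw [← map_mul, single_mul_single_of_ne _ _ (by decide), map_zero])
    (by rw [← map_mul, single_mul_single_of_ne _ _ (by decide), map_zero])
    (by rw [← map_mul, single_mul_single])
  exact single_ne_zero _ _ _ ((map_eq_zero_iff φ φ.injective).1 hφ₁₄)

end P4

theorem theta4_mu4_samePI_not_gradedIso_general (F : Type*) [Field F] :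
    (∀ Phi : FreeAlgebra F (ℕ × Multiplicative (ZMod 3)),
        IsGradedPI (elemSubspace F theta4) Phi ↔ IsGradedPI (elemSubspace F mu4) Phi) ∧
      ¬∃ φ : IncidenceAlgebra F P4 ≃ₐ[F] IncidenceAlgebra F P4,
          ∀ g : Multiplicative (ZMod 3),
            (elemSubspace F theta4 g).map φ.toLinearMap = elemSubspace F mu4 g :=
  ⟨P4.isGradedPI_theta4_iff_mu4, P4.not_exists_gradedIso_theta4_mu4⟩

/-- over a field `F` of characteristic zero, with `G` the cyclic group of order
three and `P = P4` as above, the elementary gradings `A^θ` and `A^μ` determined by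
`θ = (1, h, h², 1)` and `μ = (1, h², h, 1)` satisfy the same `G`-graded polynomial identities,
yet they are not isomorphic as `G`-graded algebras. -/
theorem theta4_mu4_samePI_not_gradedIso (F : Type*) [Field F] [CharZero F] :
    (∀ Phi : FreeAlgebra F (ℕ × Multiplicative (ZMod 3)),
        IsGradedPI (elemSubspace F theta4) Phi ↔ IsGradedPI (elemSubspace F mu4) Phi) ∧
      ¬∃ φ : IncidenceAlgebra F P4 ≃ₐ[F] IncidenceAlgebra F P4,
          ∀ g : Multiplicative (ZMod 3),
            (elemSubspace F theta4 g).map φ.toLinearMap = elemSubspace F mu4 g :=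
  theta4_mu4_samePI_not_gradedIso_general F
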